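/- For a linear program min cᵀx subject to Ax = b, x ∈ ℝⁿ, if both the primal and dual are feasible, then the optimal primal objective value equals the optimal dual objective value; in particular the bilinear term cᵀx* at a primal optimum x* equals bᵀy* for any dual optimum y*. -/
import Mathlib


open Matrix

lemma lp_key {m n : ℕ} (A : Matrix (Fin m) (Fin n) ℝ) (b : Fin m → ℝ) (c : Fin n → ℝ)
    {x : Fin n → ℝ} {y : Fin m → ℝ} (hx : A.mulVec x = b) (hy : Aᵀ.mulVec y = c) :
    c ⬝ᵥ x = b ⬝ᵥ y := by
  rw [← hx, ← hy, Matrix.mulVec_transpose, dotProduct_comm (A *ᵥ x) y,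
    Matrix.dotProduct_mulVec]

/-- LP strong duality for `min cᵀx s.t. Ax = b` (x free) with dual
`max bᵀy s.t. Aᵀy = c`: if both problems are feasible, the optimal primal value
equals the optimal dual value, and `cᵀx* = bᵀy*` for any primal optimum `x*`
and dual optimum `y*`. -/
theorem lp_equality_strong_duality {m n : ℕ}
    (A : Matrix (Fin m) (Fin n) ℝ) (b : Fin m → ℝ) (c : Fin n → ℝ)
    (hP : ∃ x : Fin n → ℝ, A.mulVec x = b)
    (hD : ∃ y : Fin m → ℝ, Aᵀ.mulVec y = c) :
    sInf {v : ℝ | ∃ x : Fin n → ℝ, A.mulVec x = b ∧ v = c ⬝ᵥ x}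
      = sSup {w : ℝ | ∃ y : Fin m → ℝ, Aᵀ.mulVec y = c ∧ w = b ⬝ᵥ y} ∧
    ∀ (xstar : Fin n → ℝ) (ystar : Fin m → ℝ),
      IsLeast {v : ℝ | ∃ x : Fin n → ℝ, A.mulVec x = b ∧ v = c ⬝ᵥ x} (c ⬝ᵥ xstar) →
      IsGreatest {w : ℝ | ∃ y : Fin m → ℝ, Aᵀ.mulVec y = c ∧ w = b ⬝ᵥ y} (b ⬝ᵥ ystar) →
      c ⬝ᵥ xstar = b ⬝ᵥ ystar := by
  obtain ⟨x₀, hx₀⟩ := hP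
  obtain ⟨y₀, hy₀⟩ := hD
  have hPset : {v : ℝ | ∃ x : Fin n → ℝ, A.mulVec x = b ∧ v = c ⬝ᵥ x} = {b ⬝ᵥ y₀} := by
    ext v
    constructor
    · rintro ⟨x, hx, rfl⟩
      exact lp_key A b c hx hy₀
    · rintro rfl
      exact ⟨x₀, hx₀, (lp_key A b c hx₀ hy₀).symm⟩
  have hDset : {w : ℝ | ∃ y : Fin m → ℝ, Aᵀ.mulVec y = c ∧ w = b ⬝ᵥ y} = {b ⬝ᵥ y₀} := by
    ext w
    constructor
    · rintro ⟨y, hy, rfl⟩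
      exact (lp_key A b c hx₀ hy).symm.trans (lp_key A b c hx₀ hy₀)
    · rintro rfl
      exact ⟨y₀, hy₀, rfl⟩
  constructor
  · rw [hPset, hDset, csInf_singleton, csSup_singleton]
  · intro xstar ystar hx hy
    have h1 : c ⬝ᵥ xstar ∈ ({b ⬝ᵥ y₀} : Set ℝ) := hPset ▸ hx.1
    have h2 : b ⬝ᵥ ystar ∈ ({b ⬝ᵥ y₀} : Set ℝ) := hDset ▸ hy.1
    rw [Set.mem_singleton_iff] at h1 h2
    rw [h1, h2]
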